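/- Let N ≥ 1 and k ∈ {0,1,…,N−1}. If a subset E ⊆ ℝ^N is k-dimensionally absolute winning, then E is ((N−k)/N)-Cantor-winning with respect to the canonical splitting structure on ℝ^N. -/

import Mathlib

open scoped Classical
open Filter Set

/-- A closed (metric) ball in a metric space, recorded by its centre and its
(positive) radius. -/
structure SSBall (X : Type*) [MetricSpace X] where
  center : X
  radius : ℝ
  radius_pos : 0 < radius

namespace SSBall

variable {X : Type*} [MetricSpace X]

/-- The underlying set of points of a ball. -/
def toSet (B : SSBall X) : Set X := Metric.closedBall B.center B.radius

end SSBall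

/-- A splitting structure `(X, S, U, f)` on a metric space `X`:
`U ⊆ ℕ` is an infinite multiplicatively closed set of positive integers, closed under
division of its elements; `f` is completely multiplicative on `U`; and `S` splits every
closed ball `B` into `f u` closed sub-balls of radius `rad(B)/u` whose centres are
`2 rad(B)/u`-separated, compatibly with multiplication in `U`. -/
structure SplittingStructure (X : Type*) [MetricSpace X] where
  U : Set ℕ
  f : ℕ → ℕ
  S : SSBall X → ℕ → Finset (SSBall X)
  U_pos : ∀ u ∈ U, 0 < u
  U_infinite : U.Infinite
  mul_mem : ∀ u ∈ U, ∀ v ∈ U, u * v ∈ U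
  div_mem : ∀ u ∈ U, ∀ v ∈ U, u ∣ v → v / u ∈ U
  f_pos : ∀ u ∈ U, 0 < f u
  f_mul : ∀ u ∈ U, ∀ v ∈ U, f (u * v) = f u * f v
  S_subset : ∀ B : SSBall X, ∀ u ∈ U, ∀ b ∈ S B u, b.toSet ⊆ B.toSet
  S_radius : ∀ B : SSBall X, ∀ u ∈ U, ∀ b ∈ S B u, b.radius = B.radius / u
  S_card : ∀ B : SSBall X, ∀ u ∈ U, (S B u).card = f u
  S_sep : ∀ B : SSBall X, ∀ u ∈ U, ∀ b₁ ∈ S B u, ∀ b₂ ∈ S B u,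
    b₁ ≠ b₂ → 2 * B.radius / u ≤ dist b₁.center b₂.center
  S_comp : ∀ B : SSBall X, ∀ u ∈ U, ∀ v ∈ U,
    S B (u * v) = (S B u).biUnion fun b => S b v

namespace SplittingStructure

variable {X : Type*} [MetricSpace X]

/-- `A_u(B)`, the union of the balls of `S(B,u)`. -/
def Au (σ : SplittingStructure X) (B : SSBall X) (u : ℕ) : Set X :=
  ⋃ b ∈ σ.S B u, b.toSet

/-- The limit set `A_∞(B)`.  (For any sequence `(u_i)` in `U` with `u_i ∣ u_{i+1}` and
`u_i → ∞` the intersection `⋂_i A_{u_i}(B)` is independent of the sequence and coincides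
with the intersection of all the sets `A_u(B)`, `u ∈ U`.) -/
def Ainfty (σ : SplittingStructure X) (B : SSBall X) : Set X :=
  ⋂ u ∈ σ.U, σ.Au B u

/-- A splitting structure is nontrivial if `f` is not identically `1` on `U`. -/
def Nontrivial (σ : SplittingStructure X) : Prop := ∃ u ∈ σ.U, σ.f u ≠ 1

/-- `K` is a generalised `(B, ℛ, r)`-Cantor set for the splitting structure `σ`:
it arises from the iterative construction that starts with `𝓑 0 = {B}`, and in which
`𝓑 (n+1)` is obtained from the collection of candidate balls
`I_{n+1} = ⋃_{B' ∈ 𝓑 n} S(B', R n)` by removing, for each `k = 0, …, n` and each ball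
`B'' ∈ 𝓑 (n-k)`, at most `r (n-k) n` balls lying in `S(B'', R_{n-k} ⋯ R_n)`
(the balls removed at stage `k` form the collection `E k`). -/
def IsGenCantor (σ : SplittingStructure X) (B : SSBall X) (R : ℕ → ℕ)
    (r : ℕ → ℕ → ℝ) (K : Set X) : Prop :=
  ∃ 𝓑 : ℕ → Finset (SSBall X),
    𝓑 0 = {B} ∧
    (∀ n : ℕ, ∃ E : ℕ → Finset (SSBall X),
      (∀ k ≤ n, E k ⊆ (𝓑 (n - k)).biUnion fun B'' =>
          σ.S B'' (∏ i ∈ Finset.range (k + 1), R (n - i))) ∧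
      (∀ k ≤ n, ∀ B'' ∈ 𝓑 (n - k),
        ((E k ∩ σ.S B'' (∏ i ∈ Finset.range (k + 1), R (n - i))).card : ℝ)
          ≤ r (n - k) n) ∧
      𝓑 (n + 1) = ((𝓑 n).biUnion fun B' => σ.S B' (R n)) \
          (Finset.range (n + 1)).biUnion E) ∧
    K = ⋂ n, ⋃ b ∈ 𝓑 n, b.toSet

/-- `E` is `ε₀`-Cantor-winning on the ball `B` for the splitting structure `σ`. -/
def CantorWinningOn (σ : SplittingStructure X) (ε₀ : ℝ) (B : SSBall X)
    (E : Set X) : Prop :=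
  ∀ ε : ℝ, 0 < ε → ε < ε₀ → ∃ Rε ∈ σ.U, ∀ R ∈ σ.U, Rε ≤ R →
    ∃ K : Set X,
      σ.IsGenCantor B (fun _ => R)
        (fun m n => (σ.f R : ℝ) ^ (((n : ℝ) - (m : ℝ) + 1) * (1 - ε))) K ∧
      K ⊆ E

/-- `E` is `ε₀`-Cantor-winning for `σ` if it is `ε₀`-Cantor-winning on every ball. -/
def CantorWinning (σ : SplittingStructure X) (ε₀ : ℝ) (E : Set X) : Prop :=
  ∀ B : SSBall X, σ.CantorWinningOn ε₀ B E

end SplittingStructure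

/-- Condition (S4) with an explicit constant `C`: no closed ball of `X` intersects more
than `C` pairwise disjoint open balls of the same radius as itself. -/
def CondS4With (X : Type*) [MetricSpace X] (C : ℕ) : Prop :=
  ∀ (x : X) (ρ : ℝ), 0 < ρ → ∀ T : Finset X,
    (∀ y ∈ T, (Metric.ball y ρ ∩ Metric.closedBall x ρ).Nonempty) →
    (T : Set X).PairwiseDisjoint (fun y => Metric.ball y ρ) →
    T.card ≤ C

/-- Condition (S4). -/
def CondS4 (X : Type*) [MetricSpace X] : Prop := ∃ C : ℕ, CondS4With X C

/-- Condition (S5): for each `K > 1` there is a constant `C(K,X)` such that no ball of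
radius `K·ρ` intersects more than `C(K,X)` pairwise disjoint open balls of radius `ρ`. -/
def CondS5 (X : Type*) [MetricSpace X] : Prop :=
  ∀ K : ℝ, 1 < K → ∃ C : ℕ, ∀ (x : X) (ρ : ℝ), 0 < ρ → ∀ T : Finset X,
    (∀ y ∈ T, (Metric.ball y ρ ∩ Metric.closedBall x (K * ρ)).Nonempty) →
    (T : Set X).PairwiseDisjoint (fun y => Metric.ball y ρ) →
    T.card ≤ C

/-- The subbox of the box `B ⊆ ℝ^N` (a ball in the sup-norm metric) indexed by
`i : Fin N → Fin u`, obtained when `B` is cut into `u ^ N` equal subboxes. -/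
noncomputable def canonicalPieceRN (N : ℕ) (B : SSBall (Fin N → ℝ)) (u : ℕ)
    (hu : 0 < u) (i : Fin N → Fin u) : SSBall (Fin N → ℝ) where
  center := fun j => B.center j - B.radius + (2 * ((i j : ℕ) : ℝ) + 1) * (B.radius / u)
  radius := B.radius / u
  radius_pos := div_pos B.radius_pos (by exact_mod_cast hu)

/-- The canonical splitting structure on `ℝ^N` (with the sup-norm metric):
`U = ℕ_{>0}`, `f u = u ^ N`, and `S(B, u)` cuts the box `B` into `u ^ N` equal
subboxes. -/
def IsCanonicalRN (N : ℕ) (σ : SplittingStructure (Fin N → ℝ)) : Prop :=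
  σ.U = {u : ℕ | 0 < u} ∧
  (∀ u : ℕ, 0 < u → σ.f u = u ^ N) ∧
  ∀ (B : SSBall (Fin N → ℝ)) (u : ℕ) (hu : 0 < u),
    σ.S B u = Finset.image (canonicalPieceRN N B u hu) Finset.univ

/-- The `k`-dimensional `β`-absolute game on `ℝ^N` (metric balls for the sup-norm are
boxes).  After Bob's move `Bob n`, Alice (following her strategy, which depends only on
Bob's moves so far) chooses a `k`-dimensional affine subspace `L_n` and `δ_n ≤ β`, and
removes the open `(δ_n · rad (Bob n))`-neighbourhood of `L_n`; Bob must reply with a box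
`Bob (n+1)` contained in the complement, of radius at least `β · rad (Bob n)`.  The set
`E` is `k`-dimensionally `β`-absolute winning if Alice can guarantee
`(⋂ n, Bob n) ∩ E ≠ ∅` for every legal play by Bob. -/
def KDimBetaAbsoluteWinning (N k : ℕ) (β : ℝ) (E : Set (Fin N → ℝ)) : Prop :=
  ∃ strat : ℕ → (ℕ → SSBall (Fin N → ℝ)) → AffineSubspace ℝ (Fin N → ℝ) × ℝ,
    (∀ (n : ℕ) (Bob Bob' : ℕ → SSBall (Fin N → ℝ)), (∀ i ≤ n, Bob i = Bob' i) →
      strat n Bob = strat n Bob') ∧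
    (∀ (n : ℕ) (Bob : ℕ → SSBall (Fin N → ℝ)),
      (strat n Bob).2 ≤ β ∧
      ((strat n Bob).1 : Set (Fin N → ℝ)).Nonempty ∧
      Module.finrank ℝ (strat n Bob).1.direction = k) ∧
    (∀ Bob : ℕ → SSBall (Fin N → ℝ),
      (∀ n : ℕ, (Bob (n + 1)).toSet ⊆ (Bob n).toSet \
          Metric.thickening ((strat n Bob).2 * (Bob n).radius)
            ((strat n Bob).1 : Set (Fin N → ℝ)) ∧
        β * (Bob n).radius ≤ (Bob (n + 1)).radius) →
      ((⋂ n, (Bob n).toSet) ∩ E).Nonempty)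

/-!
Fix `ε < (N - k) / N`, a large `R` and `β = 1 / R`, and let Alice follow her winning strategy
against a Bob who always moves to one of the `R ^ N` subboxes of side ratio `1 / R` of his current
box. The subboxes meeting a removed neighbourhood of a `k`-dimensional affine subspace number
`O(R ^ k)` (a packing argument along the subspace), hence at most `R ^ (N (1 - ε))` once `R` is
large. Discarding them at every level yields a generalised Cantor set; by Kőnig's lemma each of
its points is the limit of a legal play, so it lies in `E` because Alice wins.
-/

section Packing

open Metric MeasureTheory Module

variable {E : Type*} [NormedAddCommGroup E] [NormedSpace ℝ E] [FiniteDimensional ℝ E]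

/-- Disjoint balls of radius `t / 2` around the points of `T` fill at most the volume of a ball
of radius `ρ + t / 2`. -/
theorem card_le_of_separated_of_dist_le {t ρ : ℝ} (ht : 0 < t) (hρ : 0 ≤ ρ) {c : E}
    {T : Finset E} (hsep : ∀ x ∈ T, ∀ y ∈ T, x ≠ y → t ≤ dist x y)
    (hball : ∀ x ∈ T, dist x c ≤ ρ) :
    (T.card : ℝ) ≤ (2 * ρ / t + 1) ^ finrank ℝ E := by
  borelize E
  set μ := (finBasis ℝ E).addHaar
  have hdisj : (T : Set E).PairwiseDisjoint fun x => ball x (t / 2) := fun x hx y hy hxy =>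
    ball_disjoint_ball (by linarith [hsep x hx y hy hxy])
  have hsub : (⋃ x ∈ T, ball x (t / 2)) ⊆ ball c (ρ + t / 2) := by
    simp only [Set.iUnion_subset_iff]
    intro x hx z hz
    exact mem_ball.2 (by linarith [dist_triangle z x c, mem_ball.1 hz, hball x hx])
  have hvol : (T.card : ENNReal) * ENNReal.ofReal ((t / 2) ^ finrank ℝ E) * μ (ball 0 1)
      ≤ ENNReal.ofReal ((ρ + t / 2) ^ finrank ℝ E) * μ (ball 0 1) := by
    calc (T.card : ENNReal) * ENNReal.ofReal ((t / 2) ^ finrank ℝ E) * μ (ball 0 1)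
        = ∑ x ∈ T, μ (ball x (t / 2)) := by
          simp only [Measure.addHaar_ball_of_pos μ _ (half_pos ht), Finset.sum_const,
            nsmul_eq_mul, mul_assoc]
      _ = μ (⋃ x ∈ T, ball x (t / 2)) :=
          (measure_biUnion_finset hdisj fun _ _ => measurableSet_ball).symm
      _ ≤ μ (ball c (ρ + t / 2)) := measure_mono hsub
      _ = ENNReal.ofReal ((ρ + t / 2) ^ finrank ℝ E) * μ (ball 0 1) :=
          Measure.addHaar_ball_of_pos μ c (by positivity)
  have hvol' : (T.card : ℝ) * (t / 2) ^ finrank ℝ E ≤ (ρ + t / 2) ^ finrank ℝ E := by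
    rw [ENNReal.mul_le_mul_iff_left (measure_ball_pos μ 0 one_pos).ne'
      measure_ball_lt_top.ne, ← ENNReal.ofReal_natCast, ← ENNReal.ofReal_mul (by positivity),
      ENNReal.ofReal_le_ofReal_iff (by positivity)] at hvol
    exact hvol
  rwa [show 2 * ρ / t + 1 = (ρ + t / 2) / (t / 2) by field_simp, div_pow,
    le_div_iff₀ (by positivity)]

theorem card_le_of_separated_of_mem_affineSubspace {t ρ : ℝ} (ht : 0 < t) (hρ : 0 ≤ ρ)
    {L : AffineSubspace ℝ E} {p : E} (hp : p ∈ L) {T : Finset E} (hTL : ∀ x ∈ T, x ∈ L)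
    (hsep : ∀ x ∈ T, ∀ y ∈ T, x ≠ y → t ≤ dist x y) (hball : ∀ x ∈ T, dist x p ≤ ρ) :
    (T.card : ℝ) ≤ (2 * ρ / t + 1) ^ finrank ℝ L.direction := by
  let T' : Finset L.direction :=
    T.preimage (fun v : L.direction => (v : E) + p) (Set.injOn_of_injective fun v w h => by
      simpa using h)
  have hT : T ⊆ T'.image fun v : L.direction => (v : E) + p := fun x hx =>
    Finset.mem_image.2 ⟨⟨x - p, AffineSubspace.vsub_mem_direction (hTL x hx) hp⟩,
      by simpa [T'] using hx, by simp⟩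
  refine (Nat.cast_le.2 ((Finset.card_le_card hT).trans Finset.card_image_le)).trans
    (card_le_of_separated_of_dist_le ht hρ (c := 0) (fun v hv w hw hvw => ?_) fun v hv => ?_)
  · simpa [Subtype.dist_eq] using
      hsep _ (Finset.mem_preimage.1 hv) _ (Finset.mem_preimage.1 hw) (by simpa using hvw)
  · simpa [Subtype.dist_eq, dist_eq_norm] using hball _ (Finset.mem_preimage.1 hv)

/-- A maximal `t`-separated subset of `Y` is a `t`-net of `Y`. -/
theorem Finset.exists_separated_subset_forall_dist_lt {X : Type*} [MetricSpace X] {t : ℝ}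
    (ht : 0 < t) (Y : Finset X) :
    ∃ S ⊆ Y, (∀ x ∈ S, ∀ y ∈ S, x ≠ y → t ≤ dist x y) ∧ ∀ y ∈ Y, ∃ s ∈ S, dist y s < t := by
  classical
  obtain ⟨S, hSmem, hSmax⟩ := Finset.exists_maximal
    (s := Y.powerset.filter fun S => ∀ x ∈ S, ∀ y ∈ S, x ≠ y → t ≤ dist x y) ⟨∅, by simp⟩
  simp only [Finset.mem_filter, Finset.mem_powerset] at hSmem hSmax
  refine ⟨S, hSmem.1, hSmem.2, fun y hy => ?_⟩
  by_contra! hfar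
  have hins : insert y S ⊆ S := hSmax ⟨Finset.insert_subset hy hSmem.1, ?_⟩
    (Finset.subset_insert y S)
  · have := hfar y (hins (Finset.mem_insert_self y S))
    simp only [dist_self] at this
    linarith
  intro a ha b hb hab
  rcases Finset.mem_insert.1 ha with rfl | ha' <;> rcases Finset.mem_insert.1 hb with rfl | hb'
  · exact absurd rfl hab
  · exact hfar b hb'
  · rw [dist_comm]; exact hfar a ha'
  · exact hSmem.2 a ha' b hb' hab

/-- Project the points to `L`, take a `t`-net of the projections (counted inside the
`k`-dimensional `L`), and count the points near each net point (inside `E`). -/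
theorem card_le_of_separated_of_infDist_le {t ρ : ℝ} (ht : 0 < t) (hρ : 0 ≤ ρ)
    {L : AffineSubspace ℝ E} (hL : (L : Set E).Nonempty) {x₀ : E} {T : Finset E}
    (hsep : ∀ x ∈ T, ∀ y ∈ T, x ≠ y → t ≤ dist x y)
    (hnear : ∀ x ∈ T, infDist x (L : Set E) ≤ t) (hball : ∀ x ∈ T, dist x x₀ ≤ ρ) :
    (T.card : ℝ) ≤ 7 ^ finrank ℝ E * (4 * ρ / t + 9) ^ finrank ℝ L.direction := by
  classical
  rcases T.eq_empty_or_nonempty with rfl | ⟨x₁, hx₁⟩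
  · simp only [Finset.card_empty, Nat.cast_zero]
    positivity
  choose! y hyL hyd using fun x (hx : x ∈ T) =>
    (infDist_lt_iff hL).1 ((hnear x hx).trans_lt (by linarith : t < 2 * t))
  obtain ⟨S, hSY, hSsep, hScov⟩ := (T.image y).exists_separated_subset_forall_dist_lt ht
  have hSL : ∀ s ∈ S, s ∈ L := fun s hs => by
    obtain ⟨x, hx, rfl⟩ := Finset.mem_image.1 (hSY hs)
    exact hyL x hx
  have hS : (S.card : ℝ) ≤ (4 * ρ / t + 9) ^ finrank ℝ L.direction := by
    refine (card_le_of_separated_of_mem_affineSubspace ht (by positivity : 0 ≤ 2 * ρ + 4 * t)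
      (hyL x₁ hx₁) hSL hSsep fun s hs => ?_).trans_eq (by field_simp; ring)
    obtain ⟨x, hx, rfl⟩ := Finset.mem_image.1 (hSY hs)
    linarith [dist_triangle4 (y x) x x₀ (y x₁), dist_triangle x₀ x₁ (y x₁), dist_comm (y x) x,
      dist_comm x₀ x₁, hyd x hx, hyd x₁ hx₁, hball x hx, hball x₁ hx₁]
  have hcover : T ⊆ S.biUnion fun s => T.filter fun x => dist x s ≤ 3 * t := fun x hx => by
    obtain ⟨s, hs, hys⟩ := hScov (y x) (Finset.mem_image_of_mem y hx)
    exact Finset.mem_biUnion.2 ⟨s, hs, Finset.mem_filter.2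
      ⟨hx, by linarith [dist_triangle x (y x) s, hyd x hx]⟩⟩
  have hnet : ∀ s, ((T.filter fun x => dist x s ≤ 3 * t).card : ℝ) ≤ 7 ^ finrank ℝ E :=
    fun s => (card_le_of_separated_of_dist_le ht (by positivity)
      (fun a ha b hb => hsep a (Finset.mem_filter.1 ha).1 b (Finset.mem_filter.1 hb).1)
      fun a ha => (Finset.mem_filter.1 ha).2).trans_eq (by field_simp; norm_num)
  calc (T.card : ℝ)
      ≤ ∑ s ∈ S, ((T.filter fun x => dist x s ≤ 3 * t).card : ℝ) := by
        exact_mod_cast (Finset.card_le_card hcover).trans Finset.card_biUnion_le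
    _ ≤ S.card * 7 ^ finrank ℝ E := by
        simpa using Finset.sum_le_sum fun s (_ : s ∈ S) => hnet s
    _ ≤ 7 ^ finrank ℝ E * (4 * ρ / t + 9) ^ finrank ℝ L.direction := by
        rw [mul_comm]; gcongr

end Packing

theorem SSBall.eq_of_forall_mem_toSet {X : Type*} [MetricSpace X] {b : ℕ → SSBall X}
    (hb : Tendsto (fun n => (b n).radius) atTop (nhds 0)) {x y : X}
    (hx : ∀ n, x ∈ (b n).toSet) (hy : ∀ n, y ∈ (b n).toSet) : x = y :=
  dist_le_zero.1 <| ge_of_tendsto (by simpa using hb.const_mul 2) <|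
    Eventually.of_forall fun n => (dist_triangle_right x y (b n).center).trans
      (by linarith [Metric.mem_closedBall.1 (hx n), Metric.mem_closedBall.1 (hy n)])

namespace SplittingStructure

section

variable {X : Type*} [MetricSpace X] (σ : SplittingStructure X) {Q p b : SSBall X} {u v : ℕ}

theorem mem_S_mul (hu : u ∈ σ.U) (hv : v ∈ σ.U) (hp : p ∈ σ.S Q u) (hb : b ∈ σ.S p v) :
    b ∈ σ.S Q (u * v) := by
  rw [σ.S_comp Q u hu v hv]
  exact Finset.mem_biUnion.2 ⟨p, hp, hb⟩

theorem exists_mem_S_of_mem_S_mul (hu : u ∈ σ.U) (hv : v ∈ σ.U) (hb : b ∈ σ.S Q (u * v)) :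
    ∃ p ∈ σ.S Q u, b ∈ σ.S p v := by
  rw [σ.S_comp Q u hu v hv] at hb
  exact Finset.mem_biUnion.1 hb

end

section

open Metric Module

variable {E : Type*} [NormedAddCommGroup E] [NormedSpace ℝ E] [FiniteDimensional ℝ E]
  (σ : SplittingStructure E)

/-- The centres of the subballs of `b` meeting the thickening are `2 rad(b) / R`-separated and
lie within `2 rad(b) / R` of `L`. -/
theorem card_filter_not_disjoint_thickening_le {R : ℕ} (hR : R ∈ σ.U) (hR3 : 3 ≤ R)
    (b : SSBall E) {L : AffineSubspace ℝ E} (hL : (L : Set E).Nonempty) {δ : ℝ}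
    (hδ : δ ≤ 1 / R) :
    (((σ.S b R).filter fun c => ¬Disjoint c.toSet (thickening (δ * b.radius) L)).card : ℝ)
      ≤ 35 ^ finrank ℝ E * (R : ℝ) ^ finrank ℝ L.direction := by
  set F := (σ.S b R).filter fun c => ¬Disjoint c.toSet (thickening (δ * b.radius) L)
  have hR3' : (3 : ℝ) ≤ R := by exact_mod_cast hR3
  have ht : 0 < 2 * b.radius / R := by have := b.radius_pos; positivity
  have hFS : ∀ c ∈ F, c ∈ σ.S b R := fun c hc => (Finset.mem_filter.1 hc).1
  have hsep : ∀ c ∈ F, ∀ c' ∈ F, c ≠ c' → 2 * b.radius / R ≤ dist c.center c'.center :=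
    fun c hc c' hc' => σ.S_sep b R hR c (hFS c hc) c' (hFS c' hc')
  have hinj : Set.InjOn SSBall.center (F : Set (SSBall E)) := by
    intro c hc c' hc' h
    by_contra hne
    have := hsep c hc c' hc' hne
    rw [h, dist_self] at this
    linarith
  have hnear : ∀ c ∈ F, infDist c.center (L : Set E) ≤ 2 * b.radius / R := fun c hc => by
    obtain ⟨z, hzc, hzL⟩ := Set.not_disjoint_iff.1 (Finset.mem_filter.1 hc).2
    obtain ⟨w, hw, hzw⟩ := mem_thickening_iff.1 hzL
    have hzc' : dist z c.center ≤ b.radius / R :=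
      σ.S_radius b R hR c (hFS c hc) ▸ mem_closedBall.1 hzc
    have hδb : δ * b.radius ≤ b.radius / R := by
      simpa [div_eq_inv_mul] using mul_le_mul_of_nonneg_right hδ b.radius_pos.le
    have htwo : 2 * b.radius / R = b.radius / R + b.radius / R := by ring
    linarith [infDist_le_dist_of_mem (x := c.center) hw, dist_triangle_left c.center w z]
  have hball : ∀ c ∈ F, dist c.center b.center ≤ b.radius := fun c hc =>
    mem_closedBall.1 (σ.S_subset b R hR c (hFS c hc)
      (mem_closedBall_self c.radius_pos.le))
  have hcount := card_le_of_separated_of_infDist_le ht b.radius_pos.le hL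
    (T := F.image SSBall.center)
    (fun _ hx _ hy hxy => by
      obtain ⟨c, hc, rfl⟩ := Finset.mem_image.1 hx
      obtain ⟨c', hc', rfl⟩ := Finset.mem_image.1 hy
      exact hsep c hc c' hc' fun h => hxy (h ▸ rfl))
    (by simpa using hnear) (by simpa using hball)
  rw [Finset.card_image_of_injOn hinj,
    show 4 * b.radius / (2 * b.radius / R) + 9 = 2 * R + 9 by
      field_simp [b.radius_pos.ne']; ring] at hcount
  calc (F.card : ℝ) ≤ 7 ^ finrank ℝ E * (2 * R + 9) ^ finrank ℝ L.direction := hcount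
    _ ≤ 7 ^ finrank ℝ E * ((5 : ℝ) ^ finrank ℝ L.direction * R ^ finrank ℝ L.direction) := by
      rw [← mul_pow]; gcongr; linarith
    _ ≤ 7 ^ finrank ℝ E * ((5 : ℝ) ^ finrank ℝ E * R ^ finrank ℝ L.direction) := by
      gcongr
      · norm_num
      · exact Submodule.finrank_le L.direction
    _ = 35 ^ finrank ℝ E * (R : ℝ) ^ finrank ℝ L.direction := by
      rw [← mul_assoc, ← mul_pow]; norm_num

end

section

variable {X : Type*} [MetricSpace X] (σ : SplittingStructure X) (B : SSBall X) (R : ℕ)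

/-- The ball of `S(B, R^j)` containing a ball `b` of `S(B, R^n)` (junk if there is none). -/
noncomputable def ancestor (n j : ℕ) (b : SSBall X) : SSBall X :=
  if h : ∃ p ∈ σ.S B (R ^ j), b ∈ σ.S p (R ^ (n - j)) then h.choose else B

/-- The only play of Bob that leads to `b ∈ S(B, R^n)`. -/
noncomputable def history (n : ℕ) (b : SSBall X) : ℕ → SSBall X :=
  fun i => if i < n then σ.ancestor B R n i b else b

/-- `A n Bob` stands for the set Alice removes after Bob's moves `Bob 0, …, Bob n`. -/
noncomputable def badChildren (A : ℕ → (ℕ → SSBall X) → Set X) (n : ℕ) (b : SSBall X) :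
    Finset (SSBall X) :=
  (σ.S b R).filter fun c => ¬Disjoint c.toSet (A n (σ.history B R n b))

noncomputable def survivors (A : ℕ → (ℕ → SSBall X) → Set X) : ℕ → Finset (SSBall X)
  | 0 => {B}
  | n + 1 => ((survivors A n).biUnion fun b => σ.S b R) \
      (survivors A n).biUnion (σ.badChildren B R A n)

theorem history_self (n : ℕ) (b : SSBall X) : σ.history B R n b n = b := by
  simp [history]

end

end SplittingStructure

def removedNbhd {E : Type*} [NormedAddCommGroup E] [NormedSpace ℝ E]
    (strat : ℕ → (ℕ → SSBall E) → AffineSubspace ℝ E × ℝ) (n : ℕ) (Bob : ℕ → SSBall E) :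
    Set E :=
  Metric.thickening ((strat n Bob).2 * (Bob n).radius) ((strat n Bob).1 : Set E)

namespace IsCanonicalRN

open SplittingStructure

variable {N : ℕ} {σ : SplittingStructure (Fin N → ℝ)} (hσ : IsCanonicalRN N σ)
  {Q B p p' b : SSBall (Fin N → ℝ)} {u v v' R n i j : ℕ}
  {A : ℕ → (ℕ → SSBall (Fin N → ℝ)) → Set (Fin N → ℝ)} {x : Fin N → ℝ}
include hσ

theorem mem_U (hu : 0 < u) : u ∈ σ.U := by
  rw [hσ.1]
  exact hu

theorem S_one (c : SSBall (Fin N → ℝ)) : σ.S c 1 = {c} := by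
  have hpiece : ∀ i, canonicalPieceRN N c 1 one_pos i = c := fun i => by
    cases c
    simp [canonicalPieceRN]
  rw [hσ.2.2 c 1 one_pos]
  ext a
  simp only [Finset.mem_image, Finset.mem_univ, true_and, Finset.mem_singleton]
  exact ⟨fun ⟨i, hi⟩ => hi ▸ hpiece i, fun ha => ⟨fun _ => 0, ha ▸ hpiece _⟩⟩

theorem dist_center_le (hu : 0 < u) (hb : b ∈ σ.S p u) :
    dist b.center p.center ≤ p.radius - p.radius / u := by
  rw [hσ.2.2 p u hu] at hb
  obtain ⟨i, -, rfl⟩ := Finset.mem_image.1 hb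
  have hu' : (1 : ℝ) ≤ u := by exact_mod_cast hu
  have hr : 0 < p.radius / u := div_pos p.radius_pos (by positivity)
  have hru : p.radius / u * u = p.radius := div_mul_cancel₀ _ (by positivity)
  refine (dist_pi_le_iff (by nlinarith)).2 fun j => ?_
  have hij : ((i j : ℕ) : ℝ) + 1 ≤ u := by exact_mod_cast (i j).2
  have hij0 : (0 : ℝ) ≤ (i j : ℕ) := Nat.cast_nonneg _
  rw [Real.dist_eq, abs_le]
  simp only [canonicalPieceRN]
  constructor <;> nlinarith

/-- The centre of a descendant of `p` lies strictly inside `p`, while the centres of distinct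
siblings are a full diameter apart. -/
theorem eq_of_mem_S_of_mem_S (hu : 0 < u) (hv : 0 < v) (hv' : 0 < v') (hp : p ∈ σ.S Q u)
    (hp' : p' ∈ σ.S Q u) (hb : b ∈ σ.S p v) (hb' : b ∈ σ.S p' v') : p = p' := by
  by_contra hne
  have hsep := σ.S_sep Q u (hσ.mem_U hu) p hp p' hp' hne
  have hrp := σ.S_radius Q u (hσ.mem_U hu) p hp
  have hrp' := σ.S_radius Q u (hσ.mem_U hu) p' hp'
  have h₁ := hσ.dist_center_le hv hb
  have h₂ := hσ.dist_center_le hv' hb'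
  have hq : 0 < p.radius / v := div_pos p.radius_pos (by exact_mod_cast hv)
  have hq' : 0 < p'.radius / v' := div_pos p'.radius_pos (by exact_mod_cast hv')
  have := dist_triangle_left p.center p'.center b.center
  rw [mul_div_assoc] at hsep
  linarith

section

variable (hR : 0 < R)
include hR

theorem ancestor_spec (hb : b ∈ σ.S B (R ^ n)) (hj : j ≤ n) :
    σ.ancestor B R n j b ∈ σ.S B (R ^ j) ∧ b ∈ σ.S (σ.ancestor B R n j b) (R ^ (n - j)) := by
  have hex : ∃ p ∈ σ.S B (R ^ j), b ∈ σ.S p (R ^ (n - j)) := by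
    rw [show R ^ n = R ^ j * R ^ (n - j) by rw [← pow_add, Nat.add_sub_cancel' hj]] at hb
    exact σ.exists_mem_S_of_mem_S_mul (hσ.mem_U (pow_pos hR j))
      (hσ.mem_U (pow_pos hR (n - j))) hb
  rw [ancestor, dif_pos hex]
  exact hex.choose_spec

theorem ancestor_eq (hb : b ∈ σ.S B (R ^ n)) (hj : j ≤ n) (hp : p ∈ σ.S B (R ^ j))
    (hbp : b ∈ σ.S p (R ^ (n - j))) : σ.ancestor B R n j b = p :=
  hσ.eq_of_mem_S_of_mem_S (pow_pos hR j) (pow_pos hR _) (pow_pos hR _)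
    (hσ.ancestor_spec hR hb hj).1 hp (hσ.ancestor_spec hR hb hj).2 hbp

theorem ancestor_self (hb : b ∈ σ.S B (R ^ n)) : σ.ancestor B R n n b = b :=
  hσ.ancestor_eq hR hb le_rfl hb (by simp [hσ.S_one])

theorem ancestor_ancestor (hb : b ∈ σ.S B (R ^ n)) (hij : i ≤ j) (hjn : j ≤ n) :
    σ.ancestor B R j i (σ.ancestor B R n j b) = σ.ancestor B R n i b := by
  obtain ⟨hpj, hbp⟩ := hσ.ancestor_spec hR hb hjn
  obtain ⟨hqi, hpq⟩ := hσ.ancestor_spec hR hpj hij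
  refine (hσ.ancestor_eq hR hb (hij.trans hjn) hqi ?_).symm
  rw [show n - i = (j - i) + (n - j) by omega, pow_add]
  exact σ.mem_S_mul (hσ.mem_U (pow_pos hR _)) (hσ.mem_U (pow_pos hR _)) hpq hbp

theorem mem_toSet_ancestor (hb : b ∈ σ.S B (R ^ n)) (hj : j ≤ n) (hx : x ∈ b.toSet) :
    x ∈ (σ.ancestor B R n j b).toSet :=
  σ.S_subset _ _ (hσ.mem_U (pow_pos hR _)) b (hσ.ancestor_spec hR hb hj).2 hx

theorem mem_S_of_mem_survivors (hb : b ∈ σ.survivors B R A n) : b ∈ σ.S B (R ^ n) := by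
  induction n generalizing b with
  | zero =>
    rw [survivors, Finset.mem_singleton] at hb
    simp [hb, hσ.S_one]
  | succ n ih =>
    rw [survivors] at hb
    obtain ⟨p, hp, hbp⟩ := Finset.mem_biUnion.1 (Finset.mem_sdiff.1 hb).1
    rw [pow_succ]
    exact σ.mem_S_mul (hσ.mem_U (pow_pos hR n)) (hσ.mem_U hR) (ih hp) hbp

theorem ancestor_mem_survivors (hb : b ∈ σ.survivors B R A n) (hj : j ≤ n) :
    σ.ancestor B R n j b ∈ σ.survivors B R A j := by
  induction n generalizing b with
  | zero =>
    obtain rfl : j = 0 := Nat.le_zero.1 hj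
    rwa [hσ.ancestor_self hR (hσ.mem_S_of_mem_survivors hR hb)]
  | succ n ih =>
    have hbS := hσ.mem_S_of_mem_survivors hR hb
    rcases hj.eq_or_lt with rfl | hjn
    · rwa [hσ.ancestor_self hR hbS]
    have hb' := hb
    rw [survivors] at hb'
    obtain ⟨p, hp, hbp⟩ := Finset.mem_biUnion.1 (Finset.mem_sdiff.1 hb').1
    have hparent : σ.ancestor B R (n + 1) n b = p :=
      hσ.ancestor_eq hR hbS n.le_succ (hσ.mem_S_of_mem_survivors hR hp) (by simpa using hbp)
    rw [← hσ.ancestor_ancestor hR hbS (Nat.lt_succ_iff.1 hjn) n.le_succ, hparent]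
    exact ih hp (Nat.lt_succ_iff.1 hjn)

/-- Kőnig's lemma applied to the finitely branching tree of surviving balls containing `x`. -/
theorem exists_branch_of_mem_iInter (hx : x ∈ ⋂ n, ⋃ b ∈ σ.survivors B R A n, b.toSet) :
    ∃ Bob : ℕ → SSBall (Fin N → ℝ), ∀ n, Bob n ∈ σ.survivors B R A n ∧ x ∈ (Bob n).toSet ∧
      ∀ i ≤ n, σ.ancestor B R n i (Bob n) = Bob i := by
  let α n := {b // b ∈ σ.survivors B R A n ∧ x ∈ b.toSet}
  have hfin : ∀ n, Finite (α n) := fun n =>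
    Finite.of_injective (fun b : α n => (⟨b.1, b.2.1⟩ : σ.survivors B R A n))
      fun b c h => Subtype.ext (congrArg Subtype.val h :)
  have : ∀ n, Nonempty (α n) := fun n => by
    obtain ⟨b, hb, hxb⟩ := Set.mem_iUnion₂.1 (Set.mem_iInter.1 hx n)
    exact ⟨⟨b, hb, hxb⟩⟩
  let π : {i j : ℕ} → i ≤ j → α j → α i := fun {i j} hij b =>
    ⟨σ.ancestor B R j i b.1, hσ.ancestor_mem_survivors hR b.2.1 hij,
      hσ.mem_toSet_ancestor hR (hσ.mem_S_of_mem_survivors hR b.2.1) hij b.2.2⟩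
  obtain ⟨f, hf⟩ := exists_seq_forall_proj_of_forall_finite π
    (fun i b => Subtype.ext (hσ.ancestor_self hR (hσ.mem_S_of_mem_survivors hR b.2.1)))
    (fun i j k hij hjk b => Subtype.ext
      (hσ.ancestor_ancestor hR (hσ.mem_S_of_mem_survivors hR b.2.1) hij hjk))
    fun i a => Set.toFinite _
  exact ⟨fun n => (f n).1, fun n => ⟨(f n).2.1, (f n).2.2, fun i hi =>
    congrArg Subtype.val (hf hi)⟩⟩

theorem exists_play_of_mem_iInter
    (hA : ∀ n Bob Bob', (∀ i ≤ n, Bob i = Bob' i) → A n Bob = A n Bob')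
    (hx : x ∈ ⋂ n, ⋃ b ∈ σ.survivors B R A n, b.toSet) :
    ∃ Bob : ℕ → SSBall (Fin N → ℝ), ∀ n, x ∈ (Bob n).toSet ∧ Bob n ∈ σ.S B (R ^ n) ∧
      Bob (n + 1) ∈ σ.S (Bob n) R ∧ Disjoint (Bob (n + 1)).toSet (A n Bob) := by
  obtain ⟨Bob, hBob⟩ := hσ.exists_branch_of_mem_iInter hR hx
  refine ⟨Bob, fun n => ⟨(hBob n).2.1, hσ.mem_S_of_mem_survivors hR (hBob n).1, ?_⟩⟩
  have hchild : Bob (n + 1) ∈ σ.S (Bob n) R := by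
    have h := (hσ.ancestor_spec hR (hσ.mem_S_of_mem_survivors hR (hBob (n + 1)).1)
      n.le_succ).2
    rwa [(hBob (n + 1)).2.2 n n.le_succ, Nat.add_sub_cancel_left, pow_one] at h
  have hhist : A n (σ.history B R n (Bob n)) = A n Bob := hA _ _ _ fun i hi => by
    rcases hi.lt_or_eq with hi | rfl
    · simp [history, hi, (hBob n).2.2 i hi.le]
    · exact σ.history_self B R i (Bob i)
  have hsurv := (hBob (n + 1)).1
  rw [survivors, Finset.mem_sdiff] at hsurv
  refine ⟨hchild, ?_⟩
  by_contra hmeet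
  exact hsurv.2 (Finset.mem_biUnion.2
    ⟨Bob n, (hBob n).1, Finset.mem_filter.2 ⟨hchild, hhist ▸ hmeet⟩⟩)

/-- Only the children of the current balls are ever removed (the case `k = 0` of the
construction). -/
theorem isGenCantor_survivors {r : ℕ → ℕ → ℝ} (hr : ∀ m n, 0 ≤ r m n)
    (hbad : ∀ n b, ((σ.badChildren B R A n b).card : ℝ) ≤ r n n) :
    σ.IsGenCantor B (fun _ => R) r (⋂ n, ⋃ b ∈ σ.survivors B R A n, b.toSet) := by
  refine ⟨σ.survivors B R A, rfl, fun n => ⟨fun k => if k = 0 then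
    (σ.survivors B R A n).biUnion (σ.badChildren B R A n) else ∅, ?_, ?_, ?_⟩, rfl⟩
  · rintro (_ | k) -
    · simp only [if_true, Nat.sub_zero, zero_add, Finset.prod_range_one]
      exact Finset.biUnion_mono fun b _ => Finset.filter_subset _ _
    · simp
  · rintro (_ | k) - b hb
    · simp only [if_true, Nat.sub_zero, zero_add, Finset.prod_range_one] at hb ⊢
      refine le_trans (Nat.cast_le.2 (Finset.card_le_card fun c hc => ?_)) (hbad n b)
      obtain ⟨hc, hcb⟩ := Finset.mem_inter.1 hc
      obtain ⟨b', hb', hcb'⟩ := Finset.mem_biUnion.1 hc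
      have hb'S := (Finset.mem_filter.1 hcb').1
      obtain rfl := hσ.eq_of_mem_S_of_mem_S (pow_pos hR n) hR hR
        (hσ.mem_S_of_mem_survivors hR hb') (hσ.mem_S_of_mem_survivors hR hb) hb'S hcb
      exact hcb'
    · simpa using hr _ _
  · rw [survivors]
    congr 1
    ext c
    simp only [Finset.mem_biUnion, Finset.mem_range]
    exact ⟨fun h => ⟨0, n.succ_pos, by simpa using h⟩, fun ⟨k, _, hk⟩ => by
      split_ifs at hk with h
      · simpa using hk
      · simp at hk⟩

end

/-- A play of Bob along the Cantor set of survivors is legal in the `(1/R)`-absolute game, and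
it shrinks to a single point. -/
theorem iInter_survivors_subset (hR : 2 ≤ R) {E : Set (Fin N → ℝ)}
    {strat : ℕ → (ℕ → SSBall (Fin N → ℝ)) → AffineSubspace ℝ (Fin N → ℝ) × ℝ}
    (hloc : ∀ n Bob Bob', (∀ i ≤ n, Bob i = Bob' i) → strat n Bob = strat n Bob')
    (hwin : ∀ Bob : ℕ → SSBall (Fin N → ℝ), (∀ n, (Bob (n + 1)).toSet ⊆ (Bob n).toSet \
        removedNbhd strat n Bob ∧ 1 / R * (Bob n).radius ≤ (Bob (n + 1)).radius) →
      ((⋂ n, (Bob n).toSet) ∩ E).Nonempty) :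
    ⋂ n, ⋃ b ∈ σ.survivors B R (removedNbhd strat) n, b.toSet ⊆ E := by
  have hR0 : 0 < R := by omega
  intro x hx
  obtain ⟨Bob, hBob⟩ := hσ.exists_play_of_mem_iInter hR0 (fun n Bob Bob' h => by
    rw [removedNbhd, removedNbhd, hloc n Bob Bob' h, h n le_rfl]) hx
  have hrad : ∀ n, (Bob n).radius = B.radius / (R : ℝ) ^ n := fun n => by
    rw [σ.S_radius B _ (hσ.mem_U (pow_pos hR0 n)) _ (hBob n).2.1, Nat.cast_pow]
  obtain ⟨y, hy, hyE⟩ := hwin Bob fun n =>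
    ⟨Set.subset_sdiff.2 ⟨σ.S_subset _ _ (hσ.mem_U hR0) _ (hBob n).2.2.1, (hBob n).2.2.2⟩,
      le_of_eq (by rw [hrad, hrad, pow_succ]; field_simp)⟩
  have hshrink : Tendsto (fun n => (Bob n).radius) atTop (nhds 0) := by
    simp only [hrad]
    exact tendsto_const_nhds.div_atTop
      (tendsto_pow_atTop_atTop_of_one_lt (by exact_mod_cast hR))
  rwa [SSBall.eq_of_forall_mem_toSet hshrink (fun n => (hBob n).1) (Set.mem_iInter.1 hy)]

end IsCanonicalRN

theorem kDimAbsoluteWinning_cantorWinning_general (N k : ℕ) (hk : k < N)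
    (σ : SplittingStructure (Fin N → ℝ)) (hσ : IsCanonicalRN N σ)
    (E : Set (Fin N → ℝ))
    (hE : ∀ β : ℝ, 0 < β → β ≤ 1 / 3 → KDimBetaAbsoluteWinning N k β E) :
    σ.CantorWinning (((N : ℝ) - (k : ℝ)) / (N : ℝ)) E := by
  intro B ε hε hεN
  have hγ : 0 < N * (1 - ε) - k := by
    rw [lt_div_iff₀ (by exact_mod_cast k.zero_le.trans_lt hk)] at hεN
    linarith
  obtain ⟨R₀, hR₀⟩ := eventually_atTop.1 (((tendsto_rpow_atTop hγ).comp
    tendsto_natCast_atTop_atTop).eventually_ge_atTop ((35 : ℝ) ^ N))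
  refine ⟨max R₀ 3, hσ.mem_U (by positivity), fun R _ hR => ?_⟩
  have hR3 : 3 ≤ R := le_of_max_le_right hR
  have hR3' : (3 : ℝ) ≤ R := by exact_mod_cast hR3
  obtain ⟨strat, hloc, hmove, hwin⟩ := hE (1 / R) (by positivity)
    (one_div_le_one_div_of_le (by norm_num) hR3')
  refine ⟨_, hσ.isGenCantor_survivors (A := removedNbhd strat) (by omega)
    (fun m n => by positivity) fun n b => ?_, hσ.iInter_survivors_subset (by omega) hloc hwin⟩
  obtain ⟨hδ, hL, hrank⟩ := hmove n (σ.history B R n b)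
  have hbad := σ.card_filter_not_disjoint_thickening_le (hσ.mem_U (by omega)) hR3 b hL hδ
  rw [Module.finrank_fin_fun, hrank] at hbad
  rw [SplittingStructure.badChildren, removedNbhd, σ.history_self]
  calc _ ≤ 35 ^ N * (R : ℝ) ^ k := hbad
    _ ≤ (R : ℝ) ^ (N * (1 - ε) - k) * R ^ k := by gcongr; exact hR₀ R (le_of_max_le_left hR)
    _ = (σ.f R : ℝ) ^ (((n : ℝ) - n + 1) * (1 - ε)) := by
      rw [hσ.2.1 R (by omega), Nat.cast_pow, ← Real.rpow_natCast, ← Real.rpow_natCast,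
        ← Real.rpow_mul (by positivity), ← Real.rpow_add (by positivity)]
      ring_nf

/-- If `E ⊆ ℝ^N` is `k`-dimensionally absolute winning
(`k ∈ {0, …, N-1}`), then `E` is `((N-k)/N)`-Cantor-winning with respect to the
canonical splitting structure on `ℝ^N`. -/
theorem kDimAbsoluteWinning_cantorWinning (N k : ℕ) (hN : 0 < N) (hk : k < N)
    (σ : SplittingStructure (Fin N → ℝ)) (hσ : IsCanonicalRN N σ)
    (E : Set (Fin N → ℝ))
    (hE : ∀ β : ℝ, 0 < β → β ≤ 1 / 3 → KDimBetaAbsoluteWinning N k β E) :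
    σ.CantorWinning (((N : ℝ) - (k : ℝ)) / (N : ℝ)) E :=
  kDimAbsoluteWinning_cantorWinning_general N k hk σ hσ E hE
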